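/- For every μ > 0, m ∈ ℝ, n ∈ ℕ, the product of the Fisher information and the second central moment (risk) of the n-th harmonic oscillator eigenfunction is independent of μ and equals I_F[ψ_n] · ∫_{−∞}^{∞} (x−m)²·ψ_n(x)² dx = 4·(n + 1/2)² = (2n+1)². -/

import Mathlib

open MeasureTheory Real

/-- The n-th physicists' Hermite polynomial (as a real function). -/
noncomputable def hermiteH : ℕ → ℝ → ℝ
  | 0, _ => 1
  | 1, x => 2 * x
  | (n + 2), x => 2 * x * hermiteH (n + 1) x - 2 * (n + 1) * hermiteH n x

/-- The n-th harmonic oscillator eigenfunction. -/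
noncomputable def ψ (μ m : ℝ) (n : ℕ) (x : ℝ) : ℝ :=
  Real.sqrt (Real.sqrt μ / (2 ^ n * n.factorial * Real.sqrt Real.pi)) *
    Real.exp (-(μ * (x - m) ^ 2) / 2) * hermiteH n (Real.sqrt μ * (x - m))

open Polynomial Filter Topology


noncomputable def Hp : ℕ → Polynomial ℝ
  | 0 => 1
  | 1 => C 2 * X
  | (n+2) => C 2 * X * Hp (n+1) - C (2*((n:ℝ)+1)) * Hp n

lemma poly_ext {p q : Polynomial ℝ} (h : ∀ x : ℝ, eval x p = eval x q) : p = q :=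
  Polynomial.funext h

lemma Hp_rec (n : ℕ) : Hp (n+1) = C 2 * X * Hp n - C (2*(n:ℝ)) * Hp (n-1) := by
  cases n with
  | zero => apply poly_ext; intro x; simp [Hp]
  | succ m => rw [Hp]; push_cast; ring_nf

lemma Hp_deriv : ∀ n : ℕ, derivative (Hp n) = C (2*(n:ℝ)) * Hp (n-1) := by
  have key : ∀ n : ℕ, derivative (Hp n) = C (2*(n:ℝ)) * Hp (n-1) ∧
      derivative (Hp (n+1)) = C (2*((n:ℝ)+1)) * Hp n := by
    intro n
    induction n with
    | zero =>
      constructor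
      · apply poly_ext; intro x; simp [Hp]
      · apply poly_ext; intro x; simp [Hp]
    | succ k ih =>
      obtain ⟨ih1, ih2⟩ := ih
      have h2 : derivative (Hp (k+2)) = C (2*((k:ℝ)+2)) * Hp (k+1) := by
        rw [show Hp (k+2) = C 2 * X * Hp (k+1) - C (2*((k:ℝ)+1)) * Hp k from by rw [Hp],
          derivative_sub, derivative_mul, derivative_mul, derivative_mul, ih2, ih1,
          show Hp (k+1) = C 2 * X * Hp k - C (2*(k:ℝ)) * Hp (k-1) from Hp_rec k]
        apply poly_ext; intro x
        simp only [derivative_mul, derivative_C, derivative_X, eval_add, eval_sub, eval_mul,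
          eval_C, eval_X, eval_one, zero_mul, mul_one, eval_zero, mul_zero, add_zero, zero_add]
        ring
      refine ⟨by simpa using ih2, by push_cast at h2 ⊢; convert h2 using 2; ring⟩
  exact fun n => (key n).1

-- X * Hp n = n * Hp (n-1) + (1/2) * Hp (n+1)
lemma X_mul_Hp (n : ℕ) : X * Hp n = C (n:ℝ) * Hp (n-1) + C (1/2) * Hp (n+1) := by
  rw [Hp_rec n]; apply poly_ext; intro x
  simp only [eval_add, eval_sub, eval_mul, eval_C, eval_X]; ring


lemma integrable_poly_gauss (P : Polynomial ℝ) :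
    Integrable fun x : ℝ => P.eval x * Real.exp (-x^2) := by
  induction P using Polynomial.induction_on' with
  | add p q hp hq => simpa [add_mul] using hp.fun_add hq
  | monomial n c =>
    have h := integrable_rpow_mul_exp_neg_mul_sq (b := 1) one_pos
      (lt_of_lt_of_le neg_one_lt_zero (Nat.cast_nonneg n))
    simp only [Real.rpow_natCast, neg_mul, one_mul] at h
    have := h.const_mul c
    simpa [Polynomial.eval_monomial, mul_assoc] using this

lemma tendsto_poly_gauss_atTop (P : Polynomial ℝ) :
    Tendsto (fun x : ℝ => P.eval x * Real.exp (-x^2)) atTop (𝓝 0) := by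
  have h3 : Tendsto (fun x : ℝ => x * (x - 1)) atTop atTop :=
    tendsto_id.atTop_mul_atTop₀ (tendsto_atTop_add_const_right atTop (-1) tendsto_id)
  have h4 : Tendsto (fun x : ℝ => x - x^2) atTop atBot :=
    (tendsto_neg_atTop_atBot.comp h3).congr (fun x => by simp; ring)
  have h2 : Tendsto (fun x : ℝ => Real.exp (x - x^2)) atTop (𝓝 0) :=
    Real.tendsto_exp_atBot.comp h4
  have := P.tendsto_div_exp_atTop.mul h2
  rw [mul_zero] at this
  apply this.congr
  intro x
  rw [Real.exp_sub, Real.exp_neg]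
  field_simp

lemma tendsto_poly_gauss_atBot (P : Polynomial ℝ) :
    Tendsto (fun x : ℝ => P.eval x * Real.exp (-x^2)) atBot (𝓝 0) := by
  have h := tendsto_poly_gauss_atTop (P.comp (-X))
  have := h.comp tendsto_neg_atBot_atTop
  apply this.congr
  intro x
  simp [Function.comp, Polynomial.eval_comp]



lemma hasDerivAt_poly_gauss (P : Polynomial ℝ) (x : ℝ) :
    HasDerivAt (fun x : ℝ => P.eval x * Real.exp (-x^2))
      ((P.derivative - C 2 * X * P).eval x * Real.exp (-x^2)) x := by
  have h1 : HasDerivAt (fun x : ℝ => P.eval x) (P.derivative.eval x) x := P.hasDerivAt x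
  have h2 : HasDerivAt (fun x : ℝ => Real.exp (-x^2)) (Real.exp (-x^2) * (-(2*x))) x := by
    have := ((hasDerivAt_pow 2 x).neg).exp
    simpa using this
  have := h1.fun_mul h2
  refine this.congr_deriv ?_
  simp only [eval_sub, eval_mul, eval_C, eval_X]
  ring

lemma integral_poly_gauss_deriv_zero (P : Polynomial ℝ) :
    ∫ x : ℝ, (P.derivative - C 2 * X * P).eval x * Real.exp (-x^2) = 0 := by
  set f := fun x : ℝ => P.eval x * Real.exp (-x^2) with hf
  set g := fun x : ℝ => (P.derivative - C 2 * X * P).eval x * Real.exp (-x^2) with hg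
  have hint : Integrable g := integrable_poly_gauss _
  have hIic : ∫ x in Set.Iic (0:ℝ), g x = f 0 - 0 := by
    apply integral_Iic_of_hasDerivAt_of_tendsto
      (hasDerivAt_poly_gauss P 0).continuousAt.continuousWithinAt
      (fun x _ => hasDerivAt_poly_gauss P x) hint.integrableOn
      (tendsto_poly_gauss_atBot P)
  have hIoi : ∫ x in Set.Ioi (0:ℝ), g x = 0 - f 0 := by
    apply integral_Ioi_of_hasDerivAt_of_tendsto
      (hasDerivAt_poly_gauss P 0).continuousAt.continuousWithinAt
      (fun x _ => hasDerivAt_poly_gauss P x) hint.integrableOn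
      (tendsto_poly_gauss_atTop P)
  have key := intervalIntegral.integral_Iic_add_Ioi (μ := volume) (b := (0:ℝ))
    hint.integrableOn hint.integrableOn
  rw [hIic, hIoi] at key
  rw [show (0:ℝ) = (f 0 - 0) + (0 - f 0) by ring]
  exact key.symm



noncomputable def GI (P : Polynomial ℝ) : ℝ := ∫ x : ℝ, P.eval x * Real.exp (-x^2)

lemma GI_add (P Q : Polynomial ℝ) : GI (P + Q) = GI P + GI Q := by
  unfold GI
  simp only [eval_add, add_mul]
  exact integral_add (integrable_poly_gauss P) (integrable_poly_gauss Q)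

lemma GI_sub (P Q : Polynomial ℝ) : GI (P - Q) = GI P - GI Q := by
  unfold GI
  simp only [eval_sub, sub_mul]
  exact integral_sub (integrable_poly_gauss P) (integrable_poly_gauss Q)

lemma GI_smul (a : ℝ) (P : Polynomial ℝ) : GI (C a * P) = a * GI P := by
  unfold GI
  simp only [eval_mul, eval_C, mul_assoc]
  exact integral_const_mul a _

-- Hp (j+1) = C 2 * X * Hp j - derivative (Hp j)
lemma Hp_succ_eq (j : ℕ) : Hp (j+1) = C 2 * X * Hp j - derivative (Hp j) := by
  rw [Hp_rec j, Hp_deriv j]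

/-- Integration by parts step. -/
lemma GI_step (j k : ℕ) : GI (Hp (j+1) * Hp k) = (2*(k:ℝ)) * GI (Hp j * Hp (k-1)) := by
  have h0 := integral_poly_gauss_deriv_zero (Hp j * Hp k)
  have hD : derivative (Hp j * Hp k) - C 2 * X * (Hp j * Hp k)
      = Hp j * (C (2*(k:ℝ)) * Hp (k-1)) - Hp (j+1) * Hp k := by
    rw [derivative_mul, ← Hp_deriv k, Hp_succ_eq j]
    ring
  have : GI (derivative (Hp j * Hp k) - C 2 * X * (Hp j * Hp k)) = 0 := h0
  rw [hD, GI_sub] at this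
  have h2 : GI (Hp j * (C (2*(k:ℝ)) * Hp (k-1))) = (2*(k:ℝ)) * GI (Hp j * Hp (k-1)) := by
    rw [show Hp j * (C (2*(k:ℝ)) * Hp (k-1)) = C (2*(k:ℝ)) * (Hp j * Hp (k-1)) by ring, GI_smul]
  linarith [this, h2]

lemma GI_norm : ∀ n : ℕ, GI (Hp n * Hp n) = 2^n * n.factorial * Real.sqrt Real.pi := by
  intro n
  induction n with
  | zero =>
    unfold GI
    simp only [Hp, mul_one, eval_one, one_mul]
    rw [show (fun x : ℝ => Real.exp (-x^2)) = fun x : ℝ => Real.exp (-1*x^2) by funext x; ring_nf]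
    rw [integral_gaussian]
    simp
  | succ m ih =>
    rw [GI_step m (m+1), Nat.add_sub_cancel, ih]
    push_cast [Nat.factorial_succ]
    ring

lemma GI_cross : ∀ k : ℕ, GI (Hp (k+2) * Hp k) = 0 := by
  intro k
  induction k with
  | zero => rw [show (0:ℕ)+2 = 1+1 from rfl, GI_step 1 0]; simp
  | succ m ih =>
    rw [show m+1+2 = (m+2)+1 from rfl, GI_step (m+2) (m+1), Nat.add_sub_cancel, ih]
    ring

lemma GI_smul2 (a b : ℝ) (P : Polynomial ℝ) : GI (C a * C b * P) = a * b * GI P := by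
  rw [← C_mul, GI_smul]

lemma GI_comb (n : ℕ) (c : ℝ) :
    GI ((C (n:ℝ) * Hp (n-1) + C c * Hp (n+1))^2)
      = (n:ℝ)^2 * GI (Hp (n-1) * Hp (n-1)) + c^2 * GI (Hp (n+1) * Hp (n+1)) := by
  have expand : (C (n:ℝ) * Hp (n-1) + C c * Hp (n+1))^2
      = C ((n:ℝ)*(n:ℝ)) * (Hp (n-1) * Hp (n-1)) +
        (C (2*(n:ℝ)*c) * (Hp (n+1) * Hp (n-1)) +
         C (c*c) * (Hp (n+1) * Hp (n+1))) := by
    apply Polynomial.funext; intro x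
    simp only [eval_add, eval_mul, eval_pow, eval_C]
    ring
  rw [expand, GI_add, GI_add, GI_smul, GI_smul, GI_smul]
  have hcross : GI (Hp (n+1) * Hp (n-1)) * (n:ℝ) = 0 := by
    cases n with
    | zero => simp
    | succ m => rw [Nat.add_sub_cancel, show m+1+1 = m+2 from rfl, GI_cross m]; ring
  have h2 : (2*(n:ℝ)*c) * GI (Hp (n+1) * Hp (n-1)) = 0 := by
    linear_combination 2*c*hcross
  rw [h2]
  ring

lemma GI_comb_val (n : ℕ) (c : ℝ) (hc : c^2 = (1/2)^2) :
    GI ((C (n:ℝ) * Hp (n-1) + C c * Hp (n+1))^2)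
      = (2^n * n.factorial * Real.sqrt Real.pi) * ((n:ℝ) + 1/2) := by
  rw [GI_comb, GI_norm, GI_norm, hc]
  cases n with
  | zero => simp; ring
  | succ m =>
    rw [Nat.add_sub_cancel]
    push_cast [Nat.factorial_succ]
    ring




lemma hermiteH_eq (n : ℕ) (x : ℝ) : hermiteH n x = (Hp n).eval x := by
  have key : ∀ k : ℕ, hermiteH k x = (Hp k).eval x ∧ hermiteH (k+1) x = (Hp (k+1)).eval x := by
    intro k
    induction k with
    | zero => constructor <;> simp [hermiteH, Hp]
    | succ j ih =>
      refine ⟨ih.2, ?_⟩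
      show hermiteH (j+2) x = (Hp (j+2)).eval x
      rw [hermiteH, Hp, ih.1, ih.2]
      simp only [eval_sub, eval_mul, eval_C, eval_X]
  exact (key n).1

lemma integral_scale (g : ℝ → ℝ) (s mm : ℝ) (hs : 0 < s) :
    ∫ x : ℝ, g (s*(x-mm)) = s⁻¹ * ∫ y : ℝ, g y := by
  have h1 : (fun x : ℝ => g (s*(x-mm))) = fun x => (fun t => g (s*t)) (x - mm) := rfl
  rw [h1, integral_sub_right_eq_self (fun t => g (s*t)) mm,
    MeasureTheory.Measure.integral_comp_mul_left (fun t => g t) s, abs_inv, abs_of_pos hs, smul_eq_mul]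

theorem stmt_7 (μ m : ℝ) (hμ : 0 < μ) (n : ℕ) :
    (4 * ∫ x : ℝ, (deriv (ψ μ m n) x) ^ 2) * (∫ x : ℝ, (x - m) ^ 2 * (ψ μ m n x) ^ 2)
      = 4 * ((n : ℝ) + 1 / 2) ^ 2
    ∧ 4 * ((n : ℝ) + 1 / 2) ^ 2 = (2 * (n : ℝ) + 1) ^ 2 := by
  constructor
  · set s := Real.sqrt μ with hs
    have hs0 : 0 < s := Real.sqrt_pos.mpr hμ
    have hs2 : s^2 = μ := Real.sq_sqrt hμ.le
    set A : ℝ := 2 ^ n * n.factorial * Real.sqrt Real.pi with hA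
    have hA0 : 0 < A := by positivity
    set c : ℝ := Real.sqrt (s / A) with hc
    have hc2 : c^2 = s / A := Real.sq_sqrt (by positivity)
    set Q : Polynomial ℝ := derivative (Hp n) - X * Hp n with hQ
    have hexp2 : ∀ a : ℝ, Real.exp (-a^2/2)^2 = Real.exp (-a^2) := by
      intro a; rw [sq, ← Real.exp_add]; congr 1; ring
    -- ψ as composition
    have hψ : ψ μ m n = fun x => c * (Real.exp (-(s*(x-m))^2/2) * (Hp n).eval (s*(x-m))) := by
      funext x
      rw [ψ, hermiteH_eq]
      have : -(μ * (x - m) ^ 2) / 2 = -(s*(x-m))^2/2 := by rw [← hs2]; ring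
      rw [this]
      ring
    -- derivative of the profile F y = exp(-y^2/2) * eval y (Hp n)
    have hF : ∀ y : ℝ, HasDerivAt (fun y => Real.exp (-y^2/2) * (Hp n).eval y)
        (Real.exp (-y^2/2) * Q.eval y) y := by
      intro y
      have h2 : HasDerivAt (fun y : ℝ => -y^2/2) (-(2*y^1)/2) y :=
        ((hasDerivAt_pow 2 y).neg).div_const 2
      have hexp := h2.exp
      have := hexp.fun_mul ((Hp n).hasDerivAt y)
      refine this.congr_deriv ?_
      simp only [hQ, eval_sub, eval_mul, eval_X]
      ring
    have hderiv : ∀ x : ℝ, deriv (ψ μ m n) x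
        = c * s * (Real.exp (-(s*(x-m))^2/2) * Q.eval (s*(x-m))) := by
      intro x
      have hu : HasDerivAt (fun x : ℝ => s*(x-m)) s x := by
        simpa using ((hasDerivAt_id x).sub_const m).const_mul s
      have hd := ((hF (s*(x-m))).comp x hu).const_mul c
      have hd' : HasDerivAt (ψ μ m n)
          (c * (Real.exp (-(s*(x-m))^2/2) * Q.eval (s*(x-m)) * s)) x := by
        rw [hψ]; exact hd
      rw [hd'.deriv]
      ring
    -- Fisher integral
    have hQval : Q = C (n:ℝ) * Hp (n-1) + C (-(1/2)) * Hp (n+1) := by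
      rw [hQ, Hp_deriv, X_mul_Hp]
      apply Polynomial.funext; intro x
      simp only [eval_add, eval_sub, eval_mul, eval_C, eval_X]
      ring
    have hFisher : (∫ x : ℝ, (deriv (ψ μ m n) x) ^ 2) = (c*s)^2 * (s⁻¹ * GI (Q^2)) := by
      set g : ℝ → ℝ := fun y => (Q^2).eval y * Real.exp (-y^2) with hg
      have hfun : (fun x : ℝ => (deriv (ψ μ m n) x) ^ 2)
          = fun x => (c*s)^2 * g (s*(x-m)) := by
        funext x
        rw [hderiv x, hg]
        simp only [eval_pow]
        rw [← hexp2 (s*(x-m))]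
        ring
      rw [hfun, MeasureTheory.integral_const_mul, integral_scale g s m hs0]
      rfl
    have hVar : (∫ x : ℝ, (x - m) ^ 2 * (ψ μ m n x) ^ 2)
        = c^2/μ * (s⁻¹ * GI ((X * Hp n)^2)) := by
      set g : ℝ → ℝ := fun y => ((X * Hp n)^2).eval y * Real.exp (-y^2) with hg
      have hfun : (fun x : ℝ => (x - m) ^ 2 * (ψ μ m n x) ^ 2)
          = fun x => c^2/μ * g (s*(x-m)) := by
        funext x
        rw [hψ, hg]
        simp only [eval_pow, eval_mul, eval_X]
        rw [← hexp2 (s*(x-m)), ← hs2]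
        field_simp
      rw [hfun, MeasureTheory.integral_const_mul, integral_scale g s m hs0]
      rfl
    have hGQ : GI (Q^2) = A * ((n:ℝ) + 1/2) := by
      rw [hQval, hA]; exact GI_comb_val n (-(1/2)) (by norm_num)
    have hGX : GI ((X * Hp n)^2) = A * ((n:ℝ) + 1/2) := by
      rw [X_mul_Hp, hA]; exact GI_comb_val n (1/2) (by norm_num)
    rw [hFisher, hVar, hGQ, hGX, mul_pow, hc2, ← hs2]
    field_simp
  · push_cast; ring
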